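/- arXiv:1212.4893 — 2 statements merged into one kernel-verified Lean document; each statement's English description precedes it below -/
import Mathlib

section
/- Let K be a positive integer and λ : Fin K → Fin K → Fin K → ℂ (written λ_{abc}) satisfy G_{ab} := Σ_{c,d} λ_{acd} · conj(λ_{dcb}) = δ_{ab}. Let z be a K×K unitary matrix and define the transformed constants λ̃_{abc} = Σ_{d,f,g} z_{ad} z_{bf} z_{cg} λ_{dfg}. Then G̃_{ab} := Σ_{c,d} λ̃_{acd} · conj(λ̃_{dcb}) = δ_{ab} as well; i.e., the Euclidean metric on the representation space is invariant under unitary transformations of the generators. -/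
open Matrix

lemma contract_aux {ι κ : Type*} [Fintype ι] [DecidableEq κ] [Fintype κ]
    (M N : ι → κ → ℂ)
    (h : ∀ r s : κ, (∑ d, M d r * N d s) = if r = s then 1 else 0)
    (F G : κ → ℂ) :
    (∑ d, (∑ r, M d r * F r) * (∑ s, N d s * G s)) = ∑ r, F r * G r := by
  have e : ∀ d : ι, (∑ r, M d r * F r) * (∑ s, N d s * G s)
      = ∑ r, ∑ s, (M d r * N d s) * (F r * G s) := by
    intro d
    rw [Finset.sum_mul_sum]
    exact Finset.sum_congr rfl fun r _ => Finset.sum_congr rfl fun s _ => by ring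
  simp_rw [e]
  rw [Finset.sum_comm]
  refine Finset.sum_congr rfl fun r _ => ?_
  rw [Finset.sum_comm]
  calc (∑ s, ∑ d, (M d r * N d s) * (F r * G s))
      = ∑ s, (∑ d, M d r * N d s) * (F r * G s) := by
        refine Finset.sum_congr rfl fun s _ => ?_
        rw [Finset.sum_mul]
    _ = ∑ s, (if r = s then 1 else 0) * (F r * G s) := by simp_rw [h]
    _ = F r * G r := by simp

lemma sum_rot {α : Type*} [AddCommMonoid α] {ι : Type*} [Fintype ι] (f : ι → ι → ι → α) :
    ∑ p, ∑ q, ∑ r, f p q r = ∑ r, ∑ q, ∑ p, f p q r := by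
  calc ∑ p, ∑ q, ∑ r, f p q r
      = ∑ p, ∑ r, ∑ q, f p q r := Finset.sum_congr rfl fun p _ => Finset.sum_comm
    _ = ∑ r, ∑ p, ∑ q, f p q r := Finset.sum_comm
    _ = ∑ r, ∑ q, ∑ p, f p q r := Finset.sum_congr rfl fun r _ => Finset.sum_comm

/-- The Euclidean metric G_{ab} = Σ_{c,d} λ_{acd} conj(λ_{dcb}) = δ_{ab} is invariant
under unitary transformations λ̃_{abc} = Σ z_{ad} z_{bf} z_{cg} λ_{dfg} of the
structure constants. -/
theorem metric_unitary_invariance {K : ℕ} (hK : 0 < K)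
    (l : Fin K → Fin K → Fin K → ℂ)
    (hG : ∀ a b : Fin K,
      (∑ c : Fin K, ∑ d : Fin K, l a c d * (starRingEnd ℂ) (l d c b))
        = if a = b then 1 else 0)
    (z : Matrix (Fin K) (Fin K) ℂ)
    (hz : z * z.conjTranspose = 1) (hz' : z.conjTranspose * z = 1)
    (l' : Fin K → Fin K → Fin K → ℂ)
    (hl' : ∀ a b c, l' a b c
      = ∑ d, ∑ f, ∑ g, z a d * z b f * z c g * l d f g) :
    ∀ a b : Fin K,
      (∑ c : Fin K, ∑ d : Fin K, l' a c d * (starRingEnd ℂ) (l' d c b))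
        = if a = b then 1 else 0 := by
  intro a b
  -- column unitarity: Σ_d z d r * conj (z d s) = δ_{rs}
  have hzd : ∀ r s : Fin K,
      (∑ d, z d r * (starRingEnd ℂ) (z d s)) = if r = s then 1 else 0 := by
    intro r s
    have h1 := congrFun (congrFun hz' s) r
    simp only [Matrix.mul_apply, Matrix.conjTranspose_apply, Matrix.one_apply] at h1
    calc (∑ d, z d r * (starRingEnd ℂ) (z d s))
        = ∑ d, star (z d s) * z d r := by
          refine Finset.sum_congr rfl fun d _ => ?_
          rw [starRingEnd_apply, mul_comm]
      _ = if s = r then 1 else 0 := h1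
      _ = if r = s then 1 else 0 := by simp [eq_comm]
  -- row unitarity: Σ_p z a p * conj (z b p) = δ_{ab}
  have hza : (∑ p, z a p * (starRingEnd ℂ) (z b p)) = if a = b then 1 else 0 := by
    have h1 := congrFun (congrFun hz a) b
    simp only [Matrix.mul_apply, Matrix.conjTranspose_apply, Matrix.one_apply] at h1
    simpa only [starRingEnd_apply] using h1
  have hA : ∀ c d : Fin K, l' a c d
      = ∑ r, z d r * (∑ q, z c q * (∑ p, l p q r * z a p)) := by
    intro c d
    rw [hl', sum_rot (fun p q r => z a p * z c q * z d r * l p q r)]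
    refine Finset.sum_congr rfl fun r _ => ?_
    simp only [Finset.mul_sum]
    exact Finset.sum_congr rfl fun q _ => Finset.sum_congr rfl fun p _ => by ring
  have hB : ∀ c d : Fin K, (starRingEnd ℂ) (l' d c b)
      = ∑ s, (starRingEnd ℂ) (z d s) *
          (∑ t, (starRingEnd ℂ) (z c t) *
            (∑ u, (starRingEnd ℂ) (l s t u) * (starRingEnd ℂ) (z b u))) := by
    intro c d
    rw [hl']
    simp only [map_sum, _root_.map_mul, Finset.mul_sum]
    refine Finset.sum_congr rfl fun s _ => Finset.sum_congr rfl fun t _ =>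
      Finset.sum_congr rfl fun u _ => by ring
  simp_rw [hA, hB]
  -- contract d
  have step1 : ∀ c : Fin K,
      (∑ d, (∑ r, z d r * (∑ q, z c q * (∑ p, l p q r * z a p))) *
        (∑ s, (starRingEnd ℂ) (z d s) *
          (∑ t, (starRingEnd ℂ) (z c t) *
            (∑ u, (starRingEnd ℂ) (l s t u) * (starRingEnd ℂ) (z b u)))))
      = ∑ r, (∑ q, z c q * (∑ p, l p q r * z a p)) *
          (∑ t, (starRingEnd ℂ) (z c t) *
            (∑ u, (starRingEnd ℂ) (l r t u) * (starRingEnd ℂ) (z b u))) :=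
    fun c => contract_aux (fun d r => z d r) (fun d s => (starRingEnd ℂ) (z d s)) hzd _ _
  simp_rw [step1]
  rw [Finset.sum_comm]
  -- contract c
  have step2 : ∀ r : Fin K,
      (∑ c, (∑ q, z c q * (∑ p, l p q r * z a p)) *
          (∑ t, (starRingEnd ℂ) (z c t) *
            (∑ u, (starRingEnd ℂ) (l r t u) * (starRingEnd ℂ) (z b u))))
      = ∑ q, (∑ p, l p q r * z a p) *
          (∑ u, (starRingEnd ℂ) (l r q u) * (starRingEnd ℂ) (z b u)) :=
    fun r => contract_aux (fun c q => z c q) (fun c t => (starRingEnd ℂ) (z c t)) hzd _ _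
  simp_rw [step2]
  -- contract (q,r) using hG
  have hGp : ∀ p u : Fin K,
      (∑ x : Fin K × Fin K, l p x.2 x.1 * (starRingEnd ℂ) (l x.1 x.2 u))
        = if p = u then 1 else 0 := by
    intro p u
    rw [Fintype.sum_prod_type]
    rw [Finset.sum_comm]
    exact hG p u
  have step3 := contract_aux (fun (x : Fin K × Fin K) p => l p x.2 x.1)
    (fun (x : Fin K × Fin K) u => (starRingEnd ℂ) (l x.1 x.2 u)) hGp
    (fun p => z a p) (fun u => (starRingEnd ℂ) (z b u))
  simp only [Fintype.sum_prod_type] at step3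
  rw [step3]
  exact hza
end

section
/- Fix k > 0 and let φ₀(r) = e^{−kr}/r and φ(r) = e^{−kr}(1/r + 3k/4 + k²r/4). Then for all r > 0, −(φ''(r) + (2/r)φ'(r)) + k² φ(r) = −k² r φ₀'(r); equivalently, φ is an exact solution of −∇²φ + k²φ = −k² x·∇φ₀ on ℝ³ \ {0} in the spherically symmetric setting. -/
/-!
Everything is explicit: writing `E = e^{-kr}`, one has `φ₀' = -E (1/r² + k/r)`,
`φ' = -E (1/r² + k/r + k²/2 + k³r/4)` and
`φ'' = E (2/r³ + 2k/r² + k²/r + k³/4 + k⁴r/4)`, each obtained from `(E g)' = E (g' - k g)`.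
Substituting, the identity is a rational-function identity in `r` and `k`.
-/

open Real Filter Topology

noncomputable def yukawa (k s : ℝ) : ℝ := exp (-k * s) / s

noncomputable def quarkPotential (k s : ℝ) : ℝ :=
  exp (-k * s) * (1 / s + 3 * k / 4 + k ^ 2 * s / 4)

theorem hasDerivAt_exp_neg_mul_mul {k r g' : ℝ} {g : ℝ → ℝ} (hg : HasDerivAt g g' r) :
    HasDerivAt (fun s => exp (-k * s) * g s) (exp (-k * r) * (g' - k * g r)) r :=
  ((HasDerivAt.exp ((hasDerivAt_id' r).const_mul (-k))).mul hg).congr_deriv (by ring)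

theorem hasDerivAt_one_div_pow (n : ℕ) {r : ℝ} (hr : r ≠ 0) :
    HasDerivAt (fun s => 1 / s ^ n) (-n / r ^ (n + 1)) r :=
  ((hasDerivAt_const r 1).div (hasDerivAt_pow n r) (pow_ne_zero n hr)).congr_deriv <| by
    rcases n with _ | n
    · simp
    · rw [Nat.add_sub_cancel]
      field_simp
      ring

theorem hasDerivAt_one_div {r : ℝ} (hr : r ≠ 0) : HasDerivAt (fun s => 1 / s) (-1 / r ^ 2) r := by
  simpa using hasDerivAt_one_div_pow 1 hr

theorem hasDerivAt_yukawa (k : ℝ) {r : ℝ} (hr : r ≠ 0) :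
    HasDerivAt (yukawa k) (-exp (-k * r) * (1 / r ^ 2 + k / r)) r := by
  have h := hasDerivAt_exp_neg_mul_mul (k := k) (hasDerivAt_one_div hr)
  simp only [mul_one_div] at h
  exact h.congr_deriv (by ring)

theorem hasDerivAt_quarkPotential (k : ℝ) {r : ℝ} (hr : r ≠ 0) :
    HasDerivAt (quarkPotential k)
      (-exp (-k * r) * (1 / r ^ 2 + k / r + k ^ 2 / 2 + k ^ 3 * r / 4)) r := by
  have hg := ((hasDerivAt_one_div hr).add_const (3 * k / 4)).fun_add
    (((hasDerivAt_id' r).const_mul (k ^ 2)).div_const 4)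
  exact (hasDerivAt_exp_neg_mul_mul (k := k) hg).congr_deriv (by field_simp; ring)

theorem deriv_quarkPotential_eventuallyEq (k : ℝ) {r : ℝ} (hr : r ≠ 0) :
    deriv (quarkPotential k) =ᶠ[𝓝 r]
      fun s => -exp (-k * s) * (1 / s ^ 2 + k / s + k ^ 2 / 2 + k ^ 3 * s / 4) := by
  filter_upwards [eventually_ne_nhds hr] with s hs
  exact (hasDerivAt_quarkPotential k hs).deriv

theorem hasDerivAt_deriv_quarkPotential (k : ℝ) {r : ℝ} (hr : r ≠ 0) :
    HasDerivAt (deriv (quarkPotential k))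
      (exp (-k * r) * (2 / r ^ 3 + 2 * k / r ^ 2 + k ^ 2 / r + k ^ 3 / 4 + k ^ 4 * r / 4)) r := by
  have hg := ((((hasDerivAt_one_div_pow 2 hr).fun_add ((hasDerivAt_one_div hr).const_mul k)).add_const
    (k ^ 2 / 2)).fun_add (((hasDerivAt_id' r).const_mul (k ^ 3)).div_const 4)).fun_neg
  refine ((hasDerivAt_exp_neg_mul_mul (k := k) hg).congr_of_eventuallyEq ?_).congr_deriv ?_
  · filter_upwards [deriv_quarkPotential_eventuallyEq k hr] with s hs
    rw [hs]
    ring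
  · push_cast
    field_simp
    ring

theorem quark_potential_exact_solution_general (k : ℝ) :
    ∀ r : ℝ, 0 < r →
      -(deriv (deriv (fun s => Real.exp (-k * s) * (1 / s + 3 * k / 4 + k ^ 2 * s / 4))) r
          + (2 / r) * deriv (fun s => Real.exp (-k * s) * (1 / s + 3 * k / 4 + k ^ 2 * s / 4)) r)
        + k ^ 2 * (Real.exp (-k * r) * (1 / r + 3 * k / 4 + k ^ 2 * r / 4))
        = -(k ^ 2) * r * deriv (fun s => Real.exp (-k * s) / s) r := by
  intro r hr
  change -(deriv (deriv (quarkPotential k)) r + 2 / r * deriv (quarkPotential k) r)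
      + k ^ 2 * quarkPotential k r = -(k ^ 2) * r * deriv (yukawa k) r
  rw [(hasDerivAt_deriv_quarkPotential k hr.ne').deriv, (hasDerivAt_quarkPotential k hr.ne').deriv,
    (hasDerivAt_yukawa k hr.ne').deriv, quarkPotential]
  field_simp
  ring

/-- With φ₀(r) = e^{−kr}/r and φ(r) = e^{−kr}(1/r + 3k/4 + k²r/4), for all r > 0 one
has −(φ'' + (2/r)φ') + k²φ = −k² r φ₀'; i.e. φ solves −∇²φ + k²φ = −k² x·∇φ₀ in the
spherically symmetric setting. -/
theorem quark_potential_exact_solution (k : ℝ) (hk : 0 < k) :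
    ∀ r : ℝ, 0 < r →
      -(deriv (deriv (fun s => Real.exp (-k * s) * (1 / s + 3 * k / 4 + k ^ 2 * s / 4))) r
          + (2 / r) * deriv (fun s => Real.exp (-k * s) * (1 / s + 3 * k / 4 + k ^ 2 * s / 4)) r)
        + k ^ 2 * (Real.exp (-k * r) * (1 / r + 3 * k / 4 + k ^ 2 * r / 4))
        = -(k ^ 2) * r * deriv (fun s => Real.exp (-k * s) / s) r :=
  quark_potential_exact_solution_general k
end
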